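/- Let g be a finite-dimensional quadratic Lie algebra (carrying an invariant nondegenerate symmetric bilinear form identifying g* ≅ g as g-modules) over a field of characteristic 0. Then the Weil module M_g = k ⊕ g* ⊕ g*[1] carries a Lie superalgebra structure making the sequence 0 → k → M_g → Dg → 0 a central extension of Lie superalgebras, where Dg = g ⊕ g[1] with the bracket induced from g. -/
import Mathlib


variable (k g : Type) [Field k] [CharZero k] [LieRing g] [LieAlgebra k g]

/-- The underlying space of the Weil module `M_g = k ⊕ g ⊕ g[1]` of a quadratic Lie
algebra (`g* ` identified with `g` via the invariant form): the first copy of `g` is even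
(the "curvature" copy), the second is odd. -/
abbrev Mw := k × g × g

/-- The parity involution on `M_g`: identity on `k ⊕ g`, minus identity on the odd
copy `g[1]`. -/
def σM (u : Mw k g) : Mw k g := (u.1, u.2.1, -u.2.2)

/-- The bracket on `M_g` built from the bracket of `g` and the invariant form `Φ`
(central extension cocycle on the odd part): 
`[(a,x,y), (a',x',y')] = (Φ(y,y'), [x,x'], [x,y'] + [y,x'])`. -/
noncomputable def BM (Φ : g →ₗ[k] g →ₗ[k] k) : Mw k g →ₗ[k] Mw k g →ₗ[k] Mw k g :=
  LinearMap.mk₂ k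
    (fun u v => (Φ u.2.2 v.2.2, ⁅u.2.1, v.2.1⁆, ⁅u.2.1, v.2.2⁆ + ⁅u.2.2, v.2.1⁆))
    (by intros m n p; simp [Prod.ext_iff, add_lie, map_add, LinearMap.add_apply]; abel)
    (by intros c m p; simp [Prod.ext_iff, smul_lie, map_smul, LinearMap.smul_apply, smul_add])
    (by intros m n p; simp [Prod.ext_iff, lie_add, map_add]; abel)
    (by intros c m p; simp [Prod.ext_iff, lie_smul, map_smul, smul_add])

/-- The bracket of the Lie superalgebra `Dg = g ⊕ g[1]` (i.e. `g ⊗ D`, `D = k[ε]`):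
`[(x,y), (x',y')] = ([x,x'], [x,y'] + [y,x'])`. -/
def DgB (u v : g × g) : g × g := (⁅u.1, v.1⁆, ⁅u.1, v.2⁆ + ⁅u.2, v.1⁆)

/-- The sign `(-1)^{pq}` for parities `p`, `q` (`true` = odd), as an element of `k`. -/
def ssign (a b : Bool) : k := if a && b then -1 else 1

/-- `±u` according to a parity flag: `σ u = pm e u` says `u` is homogeneous of
parity `e`. -/
def pm {V : Type} [AddCommGroup V] (e : Bool) (u : V) : V := if e then -u else u

lemma neg_self_zero {V : Type} [AddCommGroup V] [Module k V] (y : V) (h : -y = y) : y = 0 := by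
  have h2 : (2 : k) • y = 0 := by rw [two_smul]; nth_rewrite 1 [← h]; rw [neg_add_cancel]
  rcases smul_eq_zero.mp h2 with h | h
  · exact absurd h (by norm_num)
  · exact h

lemma hom_decode (e : Bool) (a : k) (x y : g) (h : σM k g (a, x, y) = pm e (a, x, y)) :
    (e = false ∧ y = 0) ∨ (e = true ∧ a = 0 ∧ x = 0) := by
  cases e
  · left
    simp [σM, pm, Prod.ext_iff] at h
    exact ⟨rfl, neg_self_zero k y (by rw [h])⟩
  · right
    simp [σM, pm, Prod.ext_iff] at h
    exact ⟨rfl, neg_self_zero k a (by rw [← h.1]), neg_self_zero k x (by rw [← h.2])⟩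

/-- Let `g` be a finite-dimensional quadratic Lie algebra (with invariant
nondegenerate symmetric form `Φ`, identifying `g* ≅ g`) over a field of characteristic `0`.
Then the Weil module `M_g = k ⊕ g ⊕ g[1]` carries a Lie superalgebra structure (the
explicit bracket `BM`) making `0 → k → M_g → Dg → 0` a central extension of Lie
superalgebras, where `Dg = g ⊕ g[1]` has the bracket induced from `g`. -/
theorem stmt14 [Module.Finite k g] (Φ : g →ₗ[k] g →ₗ[k] k)
    (hsymm : ∀ x y, Φ x y = Φ y x)
    (hinv : ∀ x y z, Φ ⁅x, y⁆ z = Φ x ⁅y, z⁆)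
    (hnd : ∀ x, (∀ y, Φ x y = 0) → x = 0) :
    -- the bracket respects parity
    (∀ u v, σM k g (BM k g Φ u v) = BM k g Φ (σM k g u) (σM k g v)) ∧
    -- super-antisymmetry on homogeneous elements
    (∀ (u v : Mw k g) (eu ev : Bool), σM k g u = pm eu u → σM k g v = pm ev v →
      BM k g Φ u v = -(ssign k eu ev • BM k g Φ v u)) ∧
    -- the super Jacobi identity on homogeneous elements
    (∀ (u v w : Mw k g) (eu ev ew : Bool),
      σM k g u = pm eu u → σM k g v = pm ev v → σM k g w = pm ew w →
      ssign k eu ew • BM k g Φ u (BM k g Φ v w) +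
        ssign k ev eu • BM k g Φ v (BM k g Φ w u) +
        ssign k ew ev • BM k g Φ w (BM k g Φ u v) = 0) ∧
    -- the copy of k is central
    (∀ (c : k) (v : Mw k g), BM k g Φ (c, 0, 0) v = 0 ∧ BM k g Φ v (c, 0, 0) = 0) ∧
    -- the projection M_g → Dg is a morphism of brackets
    (∀ u v : Mw k g, (BM k g Φ u v).2 = DgB g u.2 v.2) ∧
    -- its kernel is exactly the central copy of k (exactness of 0 → k → M_g → Dg → 0)
    (∀ u : Mw k g, u.2 = 0 ↔ ∃ c : k, u = (c, 0, 0)) := by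
  have C : ∀ x y z : g, Φ y ⁅z, x⁆ = Φ z ⁅x, y⁆ := by
    intro x y z; rw [hsymm, hinv]
  have C2 : ∀ x y z : g, Φ z ⁅x, y⁆ = Φ y ⁅z, x⁆ := fun x y z => (C x y z).symm
  refine ⟨?_, ?_, ?_, ?_, ?_, ?_⟩
  · intro u v
    simp [σM, BM, Prod.ext_iff, map_neg, neg_add]
    abel
  · rintro ⟨a, x, y⟩ ⟨a', x', y'⟩ eu ev hu hv
    rcases hom_decode k g eu a x y hu with ⟨rfl, rfl⟩ | ⟨rfl, rfl, rfl⟩ <;>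
      rcases hom_decode k g ev a' x' y' hv with ⟨rfl, rfl⟩ | ⟨rfl, rfl, rfl⟩ <;>
      simp [BM, ssign, Prod.ext_iff, lie_skew, hsymm]
  · rintro ⟨a, x, y⟩ ⟨a', x', y'⟩ ⟨a'', x'', y''⟩ eu ev ew hu hv hw
    rcases hom_decode k g eu a x y hu with ⟨rfl, rfl⟩ | ⟨rfl, rfl, rfl⟩ <;>
      rcases hom_decode k g ev a' x' y' hv with ⟨rfl, rfl⟩ | ⟨rfl, rfl, rfl⟩ <;>
      rcases hom_decode k g ew a'' x'' y'' hw with ⟨rfl, rfl⟩ | ⟨rfl, rfl, rfl⟩ <;>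
      simp [BM, ssign, Prod.ext_iff, smul_add] <;>
      first
        | exact lie_jacobi _ _ _
        | (rw [C]; ring1)
        | (rw [C, C]; ring1)
        | linear_combination C x' y'' y
        | linear_combination C y x' y''
        | linear_combination C x y' y''
        | linear_combination C x'' y y'
  · intro c v
    constructor <;> simp [BM, Prod.ext_iff]
  · intro u v
    simp [BM, DgB]
  · rintro ⟨a, x, y⟩
    constructor
    · rintro h
      simp only [Prod.mk.injEq, Prod.ext_iff] at h
      exact ⟨a, by simp [Prod.ext_iff, h.1, h.2]⟩
    · rintro ⟨c, hc⟩
      simp [Prod.ext_iff] at hc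
      simp [hc.2.1, hc.2.2]
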